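/- arXiv:2605.24586 — 4 statements merged into one kernel-verified Lean document; each statement's English description precedes it below -/
import Mathlib

section
/- For all non-negative integers n and positive integers k, the Stirling number of the second kind S(n+k, k) equals the complete homogeneous symmetric polynomial h_n evaluated at (1, 2, …, k); that is, S(n+k,k) = Σ_{1 ≤ i₁ ≤ i₂ ≤ ⋯ ≤ i_n ≤ k} i₁ i₂ ⋯ i_n. -/
open scoped Classical

/-- The Stirling number of the second kind `S(m, k)`: the number of partitions of an
`m`-element set into `k` non-empty blocks. -/
noncomputable def stirling2 (m k : ℕ) : ℕ :=
  Nat.card {P : Finpartition (Finset.univ : Finset (Fin m)) // P.parts.card = k}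

/-- The complete homogeneous symmetric polynomial of degree `n` evaluated at
`(1, 2, …, k)`, i.e. `∑_{1 ≤ z₁ ≤ ⋯ ≤ z_n ≤ k} z₁ ⋯ z_n`. -/
noncomputable def hNat (n k : ℕ) : ℕ :=
  ∑ f ∈ Finset.univ.filter (fun f : Fin n → Fin k => Monotone f), ∏ i, ((f i : ℕ) + 1)

open Finset

lemma hNat_zero (k : ℕ) : hNat 0 k = 1 := by
  unfold hNat
  have hf : (Finset.univ.filter (fun f : Fin 0 → Fin k => Monotone f)) = Finset.univ := by
    apply Finset.filter_true_of_mem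
    intro f _
    intro i j _
    exact le_of_eq (congrArg f (Subsingleton.elim i j))
  rw [hf]
  simp

lemma hNat_zero_right (n : ℕ) : hNat (n + 1) 0 = 0 := by
  unfold hNat
  haveI : IsEmpty (Fin (n+1) → Fin 0) := ⟨fun f => (f 0).elim0⟩
  simp

lemma hNat_succ (n k : ℕ) :
    hNat (n + 1) (k + 1) = (k + 1) * hNat n (k + 1) + hNat (n + 1) k := by
  unfold hNat
  rw [← Finset.sum_filter_add_sum_filter_not
    (Finset.univ.filter (fun f : Fin (n+1) → Fin (k+1) => Monotone f))
    (fun f => f (Fin.last n) = Fin.last k)]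
  congr 1
  · -- top case: f last = last  ↦  (k+1) * hNat n (k+1)
    rw [Finset.mul_sum]
    refine Finset.sum_bij' (i := fun f _ => f ∘ Fin.castSucc)
      (j := fun g _ => Fin.snoc g (Fin.last k)) ?_ ?_ ?_ ?_ ?_
    · intro f hf
      simp only [Finset.mem_filter, Finset.mem_univ, true_and] at hf ⊢
      exact fun a b hab => hf.1 (by simpa using hab)
    · intro g hg
      simp only [Finset.mem_filter, Finset.mem_univ, true_and] at hg ⊢
      constructor
      · intro a b hab
        rcases Fin.eq_castSucc_or_eq_last a with ⟨a', rfl⟩ | rfl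
        · rcases Fin.eq_castSucc_or_eq_last b with ⟨b', rfl⟩ | rfl
          · simp only [Fin.snoc_castSucc]
            exact hg (by simpa using hab)
          · simp only [Fin.snoc_last, Fin.snoc_castSucc]
            exact Fin.le_last _
        · have : b = Fin.last n := le_antisymm (Fin.le_last _) hab
          subst this
          exact le_rfl
      · simp
    · intro f hf
      simp only [Finset.mem_filter, Finset.mem_univ, true_and] at hf
      funext a
      rcases Fin.eq_castSucc_or_eq_last a with ⟨a', rfl⟩ | rfl
      · simp
      · simp [hf.2]
    · intro g hg
      funext a
      simp
    · intro f hf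
      simp only [Finset.mem_filter, Finset.mem_univ, true_and] at hf
      rw [Fin.prod_univ_castSucc]
      rw [hf.2]
      simp [mul_comm]
  · -- lower case: f last ≠ last  ↦  hNat (n+1) k
    refine Finset.sum_bij' (i := fun f hf => fun a => ?_)
      (j := fun h _ => fun a => (h a).castSucc) ?_ ?_ ?_ ?_ ?_
    · -- the map: f a has value < k
      simp only [Finset.mem_filter, Finset.mem_univ, true_and] at hf
      exact ⟨(f a : ℕ), by
        have h1 : f a ≤ f (Fin.last n) := hf.1 (Fin.le_last a)
        have h2 : f (Fin.last n) < Fin.last k := Fin.lt_last_iff_ne_last.2 hf.2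
        exact lt_of_le_of_lt h1 h2⟩
    · intro f hf
      simp only [Finset.mem_filter, Finset.mem_univ, true_and] at hf ⊢
      intro a b hab
      have := hf.1 hab
      exact this
    · intro h hh
      simp only [Finset.mem_filter, Finset.mem_univ, true_and] at hh ⊢
      constructor
      · exact fun a b hab => by simpa using hh hab
      · intro hcon
        exact absurd (congrArg Fin.val hcon) (by simp [Fin.val_last, (h (Fin.last n)).isLt.ne])
    · intro f hf
      funext a
      apply Fin.ext
      simp
    · intro h hh
      funext a
      apply Fin.ext
      simp
    · intro f hf
      rfl


section Infra

variable {γ : Type*} [DecidableEq γ] {δ : Type*} [DecidableEq δ]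

instance fpFinite [Fintype γ] (s : Finset γ) : Finite (Finpartition s) :=
  Finite.of_injective Finpartition.parts (fun _ _ h => Finpartition.ext h)

/-- Map a finpartition of `univ` along a type equivalence. -/
def pmap [Fintype γ] [Fintype δ] (e : γ ≃ δ) (P : Finpartition (univ : Finset γ)) :
    Finpartition (univ : Finset δ) where
  parts := P.parts.image (Finset.image e)
  supIndep := by
    rw [Finset.supIndep_iff_pairwiseDisjoint]
    intro x hx y hy hxy
    simp only [coe_image, Set.mem_image, mem_coe] at hx hy
    obtain ⟨p, hp, rfl⟩ := hx
    obtain ⟨q, hq, rfl⟩ := hy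
    have hpq : p ≠ q := fun h => hxy (by rw [h])
    exact (Finset.disjoint_image e.injective).2
      (P.supIndep.pairwiseDisjoint hp hq hpq)
  sup_parts := by
    apply le_antisymm (Finset.sup_le fun t _ => Finset.subset_univ t)
    intro x _
    rw [Finset.mem_sup]
    obtain ⟨t, ht, hxt⟩ := P.exists_mem (Finset.mem_univ (e.symm x))
    exact ⟨t.image e, Finset.mem_image_of_mem _ ht,
      by simpa using Finset.mem_image_of_mem e hxt⟩
  bot_notMem := by
    simp only [bot_eq_empty, Finset.mem_image]
    rintro ⟨p, hp, hpe⟩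
    exact P.bot_notMem (by rwa [Finset.image_eq_empty.1 hpe] at hp)

lemma pmap_parts_card [Fintype γ] [Fintype δ] (e : γ ≃ δ) (P : Finpartition (univ : Finset γ)) :
    (pmap e P).parts.card = P.parts.card :=
  Finset.card_image_of_injective _ (Finset.image_injective e.injective)

lemma pmap_pmap_symm [Fintype γ] [Fintype δ] (e : γ ≃ δ) (P : Finpartition (univ : Finset γ)) :
    pmap e.symm (pmap e P) = P := by
  apply Finpartition.ext
  show (P.parts.image (Finset.image e)).image (Finset.image e.symm) = P.parts
  rw [Finset.image_image]
  have : (Finset.image e.symm ∘ Finset.image e) = id := by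
    funext t
    simp [Finset.image_image, Equiv.symm_comp_self]
  rw [this, Finset.image_id]

/-- Transfer of the counting problem along a type equivalence. -/
def pEquivSub [Fintype γ] [Fintype δ] (e : γ ≃ δ) (k : ℕ) :
    {P : Finpartition (univ : Finset γ) // P.parts.card = k} ≃
      {P : Finpartition (univ : Finset δ) // P.parts.card = k} where
  toFun P := ⟨pmap e P.1, by rw [pmap_parts_card]; exact P.2⟩
  invFun P := ⟨pmap e.symm P.1, by rw [pmap_parts_card]; exact P.2⟩
  left_inv P := Subtype.ext (pmap_pmap_symm e P.1)
  right_inv P := Subtype.ext (by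
    have := pmap_pmap_symm e.symm P.1
    rwa [Equiv.symm_symm] at this)

end Infra



section OptionStep

variable {α : Type*} [DecidableEq α] [Fintype α]

local notation "β" => Option α

lemma eraseNone_nonempty_of_mem {P : Finpartition (univ : Finset β)} {p : Finset β}
    (hp : p ∈ P.parts) (hne : p ≠ {none}) : p.eraseNone.Nonempty := by
  rw [Finset.nonempty_iff_ne_empty]
  intro h
  apply hne
  have hsub : p ⊆ {none} := by
    intro o ho
    match o with
    | none => exact Finset.mem_singleton_self none
    | some a =>
      exfalso
      have : a ∈ p.eraseNone := Finset.mem_eraseNone.2 ho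
      rw [h] at this
      exact absurd this (Finset.notMem_empty a)
  rcases Finset.subset_singleton_iff.1 hsub with h' | h'
  · exact absurd h' (Finpartition.nonempty_of_mem_parts P hp).ne_empty
  · exact h'

lemma eraseNone_injOn_parts {P : Finpartition (univ : Finset β)} {p q : Finset β}
    (hp : p ∈ P.parts) (hq : q ∈ P.parts) (hpn : p ≠ {none}) (h : p.eraseNone = q.eraseNone) :
    p = q := by
  obtain ⟨a, ha⟩ := eraseNone_nonempty_of_mem hp hpn
  have ha' : a ∈ q.eraseNone := h ▸ ha
  exact P.eq_of_mem_parts hp hq (Finset.mem_eraseNone.1 ha) (Finset.mem_eraseNone.1 ha')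

/-- Restrict a finpartition of `Option α` to a finpartition of `α` by deleting `none`. -/
def restrictO (P : Finpartition (univ : Finset β)) : Finpartition (univ : Finset α) where
  parts := (P.parts.image Finset.eraseNone).erase ∅
  supIndep := by
    rw [Finset.supIndep_iff_pairwiseDisjoint]
    intro x hx y hy hxy
    simp only [coe_erase, Set.mem_diff, mem_coe, Finset.mem_image, Set.mem_singleton_iff] at hx hy
    obtain ⟨⟨p, hp, rfl⟩, -⟩ := hx
    obtain ⟨⟨q, hq, rfl⟩, -⟩ := hy
    show Disjoint (Finset.eraseNone p) (Finset.eraseNone q)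
    rw [Finset.disjoint_left]
    intro a ha ha'
    exact hxy (by rw [P.eq_of_mem_parts hp hq (Finset.mem_eraseNone.1 ha)
      (Finset.mem_eraseNone.1 ha')])
  sup_parts := by
    apply le_antisymm (Finset.sup_le fun t _ => Finset.subset_univ t)
    intro a _
    rw [Finset.mem_sup]
    obtain ⟨t, ht, hat⟩ := P.exists_mem (Finset.mem_univ (some a))
    have hane : a ∈ t.eraseNone := Finset.mem_eraseNone.2 hat
    refine ⟨t.eraseNone, ?_, hane⟩
    exact Finset.mem_erase.2 ⟨Finset.nonempty_iff_ne_empty.1 ⟨a, hane⟩,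
      Finset.mem_image_of_mem _ ht⟩
  bot_notMem := Finset.notMem_erase _ _

lemma mem_restrictO_parts {P : Finpartition (univ : Finset β)} {t : Finset α} :
    t ∈ (restrictO P).parts ↔ t ≠ ∅ ∧ ∃ p ∈ P.parts, p.eraseNone = t := by
  simp only [restrictO, Finset.mem_erase, Finset.mem_image]

/-- Add `none` to a given part (or as a singleton, if `s = ∅`). -/
def liftO (Q : Finpartition (univ : Finset α)) (s : Finset α) (hs : s = ∅ ∨ s ∈ Q.parts) :
    Finpartition (univ : Finset β) where
  parts := insert (Finset.insertNone s)
    ((Q.parts.erase s).image (Finset.map Function.Embedding.some))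
  supIndep := by
    rw [Finset.supIndep_iff_pairwiseDisjoint]
    intro x hx y hy hxy
    simp only [coe_insert, Set.mem_insert_iff, coe_image, Set.mem_image, mem_coe] at hx hy
    have key : ∀ t ∈ Q.parts.erase s,
        Disjoint (Finset.insertNone s) (t.map Function.Embedding.some) := by
      intro t ht
      rw [Finset.mem_erase] at ht
      rw [Finset.disjoint_left]
      intro o ho ho'
      match o with
      | none => simp at ho'
      | some a =>
        rw [Finset.some_mem_insertNone] at ho
        rw [Finset.mem_map] at ho'
        obtain ⟨b, hb, hb'⟩ := ho'
        have hab : a = b := by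
          simpa [Function.Embedding.some] using hb'.symm
        subst hab
        rcases hs with rfl | hmem
        · exact absurd ho (Finset.notMem_empty a)
        · exact ht.1 (Q.eq_of_mem_parts ht.2 hmem hb ho)
    rcases hx with rfl | ⟨p, hp, rfl⟩
    · rcases hy with rfl | ⟨q, hq, rfl⟩
      · exact absurd rfl hxy
      · exact key q hq
    · rcases hy with rfl | ⟨q, hq, rfl⟩
      · exact (key p hp).symm
      · show Disjoint (p.map Function.Embedding.some) (q.map Function.Embedding.some)
        refine (Finset.disjoint_map _).2 ?_
        have hpq : p ≠ q := fun h => hxy (by rw [h])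
        exact Q.supIndep.pairwiseDisjoint (Finset.mem_of_mem_erase hp)
          (Finset.mem_of_mem_erase hq) hpq
  sup_parts := by
    apply le_antisymm (Finset.sup_le fun t _ => Finset.subset_univ t)
    intro o _
    rw [Finset.mem_sup]
    match o with
    | none =>
      exact ⟨Finset.insertNone s, Finset.mem_insert_self _ _, Finset.none_mem_insertNone⟩
    | some a =>
      obtain ⟨t, ht, hat⟩ := Q.exists_mem (Finset.mem_univ a)
      by_cases hts : t = s
      · subst hts
        exact ⟨Finset.insertNone t, Finset.mem_insert_self _ _,
          Finset.some_mem_insertNone.2 hat⟩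
      · refine ⟨t.map Function.Embedding.some, ?_, ?_⟩
        · exact Finset.mem_insert_of_mem
            (Finset.mem_image_of_mem _ (Finset.mem_erase.2 ⟨hts, ht⟩))
        · simp [Function.Embedding.some, hat]
  bot_notMem := by
    simp only [bot_eq_empty, Finset.mem_insert, Finset.mem_image]
    push_neg
    constructor
    · exact fun h => by
        have := Finset.none_mem_insertNone (s := s)
        rw [← h] at this
        exact absurd this (Finset.notMem_empty _)
    · intro t ht
      rw [Finset.map_nonempty]
      exact Q.nonempty_of_mem_parts (Finset.mem_of_mem_erase ht)

end OptionStep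

section OptionStep2

variable {α : Type*} [DecidableEq α] [Fintype α]

local notation "β" => Option α

lemma insertNone_not_mem_image (Q : Finpartition (univ : Finset α)) (s : Finset α) :
    Finset.insertNone s ∉ (Q.parts.erase s).image (Finset.map Function.Embedding.some) := by
  rw [Finset.mem_image]
  rintro ⟨t, -, h⟩
  have : (none : β) ∈ t.map Function.Embedding.some := h.symm ▸ Finset.none_mem_insertNone
  simp at this

lemma liftO_parts (Q : Finpartition (univ : Finset α)) (s : Finset α)
    (hs : s = ∅ ∨ s ∈ Q.parts) :
    (liftO Q s hs).parts = insert (Finset.insertNone s)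
      ((Q.parts.erase s).image (Finset.map Function.Embedding.some)) := rfl

lemma liftO_card_sing (Q : Finpartition (univ : Finset α)) :
    (liftO Q ∅ (Or.inl rfl)).parts.card = Q.parts.card + 1 := by
  rw [liftO_parts, Finset.card_insert_of_notMem (insertNone_not_mem_image Q ∅),
    Finset.card_image_of_injective _ (Finset.map_injective _),
    Finset.erase_eq_of_notMem (by simpa using Q.bot_notMem)]

lemma liftO_card_part (Q : Finpartition (univ : Finset α)) (s : Finset α) (hs : s ∈ Q.parts) :
    (liftO Q s (Or.inr hs)).parts.card = Q.parts.card := by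
  rw [liftO_parts, Finset.card_insert_of_notMem (insertNone_not_mem_image Q s),
    Finset.card_image_of_injective _ (Finset.map_injective _),
    Finset.card_erase_of_mem hs]
  have h1 : 1 ≤ Q.parts.card := Finset.card_pos.2 ⟨s, hs⟩
  omega

lemma singleton_none_mem_liftO_iff (Q : Finpartition (univ : Finset α)) (s : Finset α)
    (hs : s = ∅ ∨ s ∈ Q.parts) :
    ({none} : Finset β) ∈ (liftO Q s hs).parts ↔ s = ∅ := by
  rw [liftO_parts, Finset.mem_insert]
  constructor
  · rintro (h | h)
    · have := congrArg Finset.eraseNone h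
      simpa using this.symm
    · exfalso
      rw [Finset.mem_image] at h
      obtain ⟨t, ht, h⟩ := h
      have htne : t.Nonempty := Q.nonempty_of_mem_parts (Finset.mem_of_mem_erase ht)
      obtain ⟨a, ha⟩ := htne
      have : (some a : β) ∈ ({none} : Finset β) := by
        rw [← h]
        simp [ha]
      simp at this
  · rintro rfl
    left
    ext o
    match o with
    | none => simp
    | some a => simp

lemma restrictO_liftO (Q : Finpartition (univ : Finset α)) (s : Finset α)
    (hs : s = ∅ ∨ s ∈ Q.parts) : restrictO (liftO Q s hs) = Q := by
  apply Finpartition.ext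
  show ((insert (Finset.insertNone s)
      ((Q.parts.erase s).image (Finset.map Function.Embedding.some))).image
        Finset.eraseNone).erase ∅ = Q.parts
  rw [Finset.image_insert, Finset.eraseNone_insertNone, Finset.image_image]
  have hcomp : ((Q.parts.erase s).image (Finset.eraseNone ∘ Finset.map Function.Embedding.some))
      = Q.parts.erase s := by
    rw [show (Finset.eraseNone ∘ Finset.map Function.Embedding.some : Finset α → Finset α)
        = id from funext fun t => Finset.eraseNone_map_some t, Finset.image_id]
  rw [hcomp]
  rcases hs with rfl | hmem
  · rw [Finset.erase_insert (Finset.notMem_erase _ _),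
      Finset.erase_eq_of_notMem (by simpa using Q.bot_notMem)]
  · rw [Finset.insert_erase hmem,
      Finset.erase_eq_of_notMem (by simpa using Q.bot_notMem)]

lemma part_none_liftO (Q : Finpartition (univ : Finset α)) (s : Finset α)
    (hs : s = ∅ ∨ s ∈ Q.parts) :
    (liftO Q s hs).part none = Finset.insertNone s :=
  Finpartition.part_eq_of_mem _ (Finset.mem_insert_self _ _) Finset.none_mem_insertNone

end OptionStep2

section OptionStep3

variable {α : Type*} [DecidableEq α] [Fintype α]

local notation "β" => Option α

lemma part_none_mem (P : Finpartition (univ : Finset β)) : P.part none ∈ P.parts :=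
  P.part_mem.2 (Finset.mem_univ none)

lemma none_mem_part_none (P : Finpartition (univ : Finset β)) : none ∈ P.part none :=
  P.mem_part (Finset.mem_univ none)

lemma none_not_mem_of_ne_part {P : Finpartition (univ : Finset β)} {p : Finset β} (hp : p ∈ P.parts) (hne : p ≠ P.part none) :
    none ∉ p := fun h =>
  hne (Finpartition.eq_of_mem_parts P hp (part_none_mem P) h (none_mem_part_none P))

lemma mem_restrictO_of_part_none {P : Finpartition (univ : Finset β)} (h : ({none} : Finset β) ∉ P.parts) :
    (P.part none).eraseNone ∈ (restrictO P).parts := by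
  rw [mem_restrictO_parts]
  have hne : P.part none ≠ {none} := fun hcon => h (hcon ▸ part_none_mem P)
  refine ⟨?_, P.part none, part_none_mem P, rfl⟩
  exact (eraseNone_nonempty_of_mem (part_none_mem P) hne).ne_empty

lemma restrictO_parts_eq {P : Finpartition (univ : Finset β)} (h : ({none} : Finset β) ∉ P.parts) :
    (restrictO P).parts = insert ((P.part none).eraseNone)
      ((P.parts.erase (P.part none)).image Finset.eraseNone) := by
  show (P.parts.image Finset.eraseNone).erase ∅ = _
  conv_lhs => rw [← Finset.insert_erase (part_none_mem P)]
  rw [Finset.image_insert]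
  rw [Finset.erase_insert_of_ne]
  · congr 1
    apply Finset.erase_eq_of_notMem
    rw [Finset.mem_image]
    rintro ⟨q, hq, hq'⟩
    have hqmem := Finset.mem_of_mem_erase hq
    have hqne : q ≠ {none} := fun hcon => h (hcon ▸ hqmem)
    exact (eraseNone_nonempty_of_mem hqmem hqne).ne_empty hq'
  · have hne : P.part none ≠ {none} := fun hcon => h (hcon ▸ part_none_mem P)
    exact (eraseNone_nonempty_of_mem (part_none_mem P) hne).ne_empty

lemma liftO_restrictO_sing {P : Finpartition (univ : Finset β)} (h : ({none} : Finset β) ∈ P.parts) :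
    liftO (restrictO P) ∅ (Or.inl rfl) = P := by
  apply Finpartition.ext
  rw [liftO_parts]
  have h0 : Finset.insertNone (∅ : Finset α) = ({none} : Finset β) := by
    ext o; match o with
    | none => simp
    | some a => simp
  have hrest : (restrictO P).parts.erase ∅ = (restrictO P).parts :=
    Finset.erase_eq_of_notMem (by simpa using (restrictO P).bot_notMem)
  rw [h0, hrest]
  -- restrictO parts = (P.parts.erase {none}).image eraseNone
  have hre : (restrictO P).parts = (P.parts.erase {none}).image Finset.eraseNone := by
    show (P.parts.image Finset.eraseNone).erase ∅ = _
    conv_lhs => rw [← Finset.insert_erase h]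
    rw [Finset.image_insert, Finset.eraseNone_none]
    apply Finset.erase_insert
    rw [Finset.mem_image]
    rintro ⟨q, hq, hq'⟩
    have hqmem := Finset.mem_of_mem_erase hq
    have hqne : q ≠ {none} := (Finset.mem_erase.1 hq).1
    exact (eraseNone_nonempty_of_mem hqmem hqne).ne_empty hq'
  rw [hre, Finset.image_image]
  have himg : ((P.parts.erase {none}).image
      (Finset.map Function.Embedding.some ∘ Finset.eraseNone)) = P.parts.erase {none} := by
    apply Finset.image_congr (g := id) ?_ |>.trans (Finset.image_id)
    intro q hq
    rw [Finset.mem_coe, Finset.mem_erase] at hq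
    have hnone : none ∉ q := by
      intro hn
      have : q = P.part none := P.eq_of_mem_parts hq.2 (part_none_mem P) hn (none_mem_part_none P)
      have hpn : P.part none = {none} := Finpartition.part_eq_of_mem P h (Finset.mem_singleton_self _)
      exact hq.1 (this.trans hpn)
    show q.eraseNone.map Function.Embedding.some = id q
    rw [Finset.map_some_eraseNone, Finset.erase_eq_of_notMem hnone, id]
  rw [himg, Finset.insert_erase h]

lemma liftO_restrictO_not {P : Finpartition (univ : Finset β)} (h : ({none} : Finset β) ∉ P.parts) :
    liftO (restrictO P) ((P.part none).eraseNone)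
      (Or.inr (mem_restrictO_of_part_none h)) = P := by
  apply Finpartition.ext
  rw [liftO_parts]
  have hins : Finset.insertNone ((P.part none).eraseNone) = P.part none := by
    rw [Finset.insertNone_eraseNone, Finset.insert_eq_self.2 (none_mem_part_none P)]
  have herase : (restrictO P).parts.erase ((P.part none).eraseNone)
      = (P.parts.erase (P.part none)).image Finset.eraseNone := by
    rw [restrictO_parts_eq h]
    apply Finset.erase_insert
    rw [Finset.mem_image]
    rintro ⟨q, hq, hq'⟩
    obtain ⟨hqne, hqmem⟩ := Finset.mem_erase.1 hq
    have hqs : q ≠ {none} := fun hcon => h (hcon ▸ hqmem)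
    obtain ⟨a, ha⟩ := eraseNone_nonempty_of_mem hqmem hqs
    have ha' : a ∈ (P.part none).eraseNone := hq' ▸ ha
    exact hqne (P.eq_of_mem_parts hqmem (part_none_mem P)
      (Finset.mem_eraseNone.1 ha) (Finset.mem_eraseNone.1 ha'))
  rw [hins, herase, Finset.image_image]
  have himg : ((P.parts.erase (P.part none)).image
      (Finset.map Function.Embedding.some ∘ Finset.eraseNone)) = P.parts.erase (P.part none) := by
    apply Finset.image_congr (g := id) ?_ |>.trans (Finset.image_id)
    intro q hq
    rw [Finset.mem_coe, Finset.mem_erase] at hq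
    have hnone : none ∉ q := none_not_mem_of_ne_part hq.2 hq.1
    show q.eraseNone.map Function.Embedding.some = id q
    rw [Finset.map_some_eraseNone, Finset.erase_eq_of_notMem hnone, id]
  rw [himg, Finset.insert_erase (part_none_mem P)]

end OptionStep3

section Count

variable {α : Type*} [DecidableEq α] [Fintype α]

/-- The central bijection: partitions of `Option α` into `k+1` parts correspond to either a
partition of `α` into `k+1` parts with a marked part (receiving `none`), or a partition of `α`
into `k` parts (with `none` in a singleton part). -/
def mainEquiv (k : ℕ) :
    {P : Finpartition (univ : Finset (Option α)) // P.parts.card = k + 1} ≃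
      ({p : {Q : Finpartition (univ : Finset α) // Q.parts.card = k + 1} × Finset α //
          p.2 ∈ p.1.1.parts} ⊕
        {Q : Finpartition (univ : Finset α) // Q.parts.card = k}) where
  toFun P :=
    if h : ({none} : Finset (Option α)) ∈ P.1.parts then
      Sum.inr ⟨restrictO P.1, by
        have hc := liftO_card_sing (restrictO P.1)
        rw [liftO_restrictO_sing h] at hc
        have := P.2
        omega⟩
    else
      Sum.inl ⟨⟨⟨restrictO P.1, by
        have hc := liftO_card_part (restrictO P.1) ((P.1.part none).eraseNone)
          (mem_restrictO_of_part_none h)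
        rw [liftO_restrictO_not h] at hc
        have := P.2
        omega⟩, (P.1.part none).eraseNone⟩, mem_restrictO_of_part_none h⟩
  invFun x :=
    match x with
    | Sum.inl ⟨⟨⟨Q, hQ⟩, s⟩, hs⟩ =>
      ⟨liftO Q s (Or.inr hs), by rw [liftO_card_part Q s hs]; exact hQ⟩
    | Sum.inr ⟨Q, hQ⟩ =>
      ⟨liftO Q ∅ (Or.inl rfl), by rw [liftO_card_sing]; omega⟩
  left_inv := by
    rintro ⟨P, hP⟩
    by_cases h : ({none} : Finset (Option α)) ∈ P.parts
    · simp only [dif_pos h]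
      exact Subtype.ext (liftO_restrictO_sing h)
    · simp only [dif_neg h]
      exact Subtype.ext (liftO_restrictO_not h)
  right_inv := by
    rintro (⟨⟨⟨Q, hQ⟩, s⟩, hs⟩ | ⟨Q, hQ⟩)
    · have hcond : ({none} : Finset (Option α)) ∉ (liftO Q s (Or.inr hs)).parts := by
        rw [singleton_none_mem_liftO_iff]
        exact (Q.nonempty_of_mem_parts hs).ne_empty
      simp only [dif_neg hcond]
      congr 1
      refine Subtype.ext (Prod.ext (Subtype.ext ?_) ?_)
      · exact restrictO_liftO Q s (Or.inr hs)
      · show ((liftO Q s (Or.inr hs)).part none).eraseNone = s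
        rw [part_none_liftO, Finset.eraseNone_insertNone]
    · have hcond : ({none} : Finset (Option α)) ∈ (liftO Q ∅ (Or.inl rfl)).parts :=
        (singleton_none_mem_liftO_iff Q ∅ (Or.inl rfl)).2 rfl
      simp only [dif_pos hcond]
      exact congrArg Sum.inr (Subtype.ext (restrictO_liftO Q ∅ (Or.inl rfl)))

lemma card_marked (k : ℕ) :
    Nat.card {p : {Q : Finpartition (univ : Finset α) // Q.parts.card = k + 1} × Finset α //
        p.2 ∈ p.1.1.parts}
      = (k + 1) * Nat.card {Q : Finpartition (univ : Finset α) // Q.parts.card = k + 1} := by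
  set E := {Q : Finpartition (univ : Finset α) // Q.parts.card = k + 1} with hE
  have e : {p : E × Finset α // p.2 ∈ p.1.1.parts} ≃ Σ Q : E, {s : Finset α // s ∈ Q.1.parts} :=
    Equiv.mk (fun p => Sigma.mk p.1.1 ⟨p.1.2, p.2⟩) (fun x => ⟨⟨x.1, x.2.1⟩, x.2.2⟩)
      (fun _ => rfl) (fun _ => rfl)
  rw [Nat.card_congr e]
  letI : Fintype E := Fintype.ofFinite _
  letI : ∀ Q : E, Fintype {s : Finset α // s ∈ Q.1.parts} := fun _ => Fintype.ofFinite _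
  rw [Nat.card_eq_fintype_card, Fintype.card_sigma]
  have hfib : ∀ Q : E, Fintype.card {s : Finset α // s ∈ Q.1.parts} = k + 1 := fun Q => by
    rw [Fintype.card_eq_nat_card]
    have : Nat.card {s : Finset α // s ∈ Q.1.parts} = Q.1.parts.card :=
      Nat.card_eq_finsetCard Q.1.parts
    rw [this, Q.2]
  rw [Finset.sum_congr rfl (fun Q _ => hfib Q), Finset.sum_const, smul_eq_mul,
    Finset.card_univ, Nat.card_eq_fintype_card, mul_comm]

theorem stirling2_succ (m k : ℕ) :
    stirling2 (m + 1) (k + 1) = (k + 1) * stirling2 m (k + 1) + stirling2 m k := by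
  unfold stirling2
  rw [Nat.card_congr (pEquivSub (finSuccEquiv m) (k + 1)),
    Nat.card_congr (mainEquiv (α := Fin m) k), Nat.card_sum, card_marked]

end Count

section Base

theorem stirling2_self (k : ℕ) : stirling2 k k = 1 := by
  unfold stirling2
  rw [Nat.card_eq_one_iff_unique]
  constructor
  · constructor
    rintro ⟨P, hP⟩ ⟨Q, hQ⟩
    have key : ∀ R : Finpartition (univ : Finset (Fin k)), R.parts.card = k → R = ⊥ := by
      intro R hR
      have hsum : ∑ t ∈ R.parts, (1 : ℕ) = ∑ t ∈ R.parts, t.card := by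
        rw [R.sum_card_parts, Finset.sum_const, smul_eq_mul, mul_one, hR, Finset.card_univ,
          Fintype.card_fin]
      have hone : ∀ t ∈ R.parts, t.card = 1 := by
        intro t ht
        exact ((Finset.sum_eq_sum_iff_of_le (fun t ht =>
          Finset.card_pos.2 (R.nonempty_of_mem_parts ht))).1 hsum t ht).symm
      apply Finpartition.ext
      ext t
      rw [Finpartition.mem_bot_iff]
      constructor
      · intro ht
        obtain ⟨a, rfl⟩ := Finset.card_eq_one.1 (hone t ht)
        exact ⟨a, Finset.mem_univ a, rfl⟩
      · rintro ⟨a, -, rfl⟩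
        obtain ⟨t, ht, hat⟩ := R.exists_mem (Finset.mem_univ a)
        obtain ⟨b, rfl⟩ := Finset.card_eq_one.1 (hone t ht)
        rw [Finset.mem_singleton] at hat
        subst hat
        exact ht
    exact Subtype.ext ((key P hP).trans (key Q hQ).symm)
  · exact ⟨⟨⊥, by rw [Finpartition.card_bot, Finset.card_univ, Fintype.card_fin]⟩⟩

theorem stirling2_zero (n : ℕ) : stirling2 (n + 1) 0 = 0 := by
  unfold stirling2
  rw [Nat.card_eq_zero]
  left
  constructor
  rintro ⟨P, hP⟩
  have hparts : P.parts = ∅ := Finset.card_eq_zero.1 hP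
  have hsup := P.sup_parts
  rw [hparts, Finset.sup_empty] at hsup
  have : (0 : Fin (n + 1)) ∈ (⊥ : Finset (Fin (n + 1))) := hsup ▸ Finset.mem_univ 0
  simp at this

end Base

theorem stmt_3' : ∀ n k : ℕ, stirling2 (n + k) k = hNat n k := by
  intro n
  induction n with
  | zero =>
    intro k
    rw [Nat.zero_add, stirling2_self, hNat_zero]
  | succ n ih =>
    intro k
    induction k with
    | zero => rw [Nat.add_zero, stirling2_zero, hNat_zero_right]
    | succ k ihk =>
      have h1 : n + 1 + (k + 1) = (n + k + 1) + 1 := by omega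
      rw [h1, stirling2_succ (n + k + 1) k]
      have h2 : n + k + 1 = n + (k + 1) := by omega
      have h3 : n + k + 1 = (n + 1) + k := by omega
      rw [show stirling2 (n + k + 1) (k + 1) = hNat n (k + 1) by rw [h2]; exact ih (k + 1),
        show stirling2 (n + k + 1) k = hNat (n + 1) k by rw [h3]; exact ihk,
        hNat_succ]

theorem stmt_3 (n k : ℕ) (hk : 0 < k) : stirling2 (n + k) k = hNat n k :=
  stmt_3' n k
end

section
/- Let d > 0 and let p(x) be a polynomial of degree d with h*-coefficients h*_0, …, h*_d defined by p(x) = Σ_{j=0}^{d} h*_j · C(x + d − j, d) (equivalently, Σ_{j≥0} p(j) x^j = (Σ h*_j x^j)/(1−x)^{d+1}). Then the coefficient of x in p(x−1) equals (−1)^{d−1} h*_d H_d + (1/d) Σ_{j=0}^{d−1} (−1)^j h*_j / C(d−1, j), where H_d is the d-th harmonic number. -/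
/-!
Substituting `x ↦ x - 1` moves the roots of `C(x + d - j, d)` to `j - d + 1, …, j`. For `j < d`
one of them is `0`, so the linear coefficient is the value at `0` of the remaining factors,
`(-1)^j j! (d-1-j)! / d! = (-1)^j / (d · C(d-1, j))`. For `j = d` the roots are `1, …, d`, and the
product rule gives the linear coefficient `(-1)^d d! · (-H_d) / d!`.
-/

/-- The polynomial binomial coefficient `C(x + d - j, d) = (x+d-j)(x+d-j-1)⋯(x-j+1)/d!`. -/
noncomputable def binomPoly (d j : ℕ) : Polynomial ℚ :=
  ((d.factorial : ℚ)⁻¹) • ∏ i ∈ Finset.range d, (Polynomial.X + Polynomial.C ((d : ℚ) - j - i))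

open Polynomial Finset Nat

section ProdXAddC

variable {R : Type*} [CommRing R] {ι : Type*} (s : Finset ι) (a : ι → R)

theorem coeff_zero_prod_X_add_C : (∏ i ∈ s, (X + C (a i))).coeff 0 = ∏ i ∈ s, a i := by
  simp [coeff_zero_prod]

theorem coeff_one_prod_X_add_C [DecidableEq ι] :
    (∏ i ∈ s, (X + C (a i))).coeff 1 = ∑ i ∈ s, ∏ i' ∈ s.erase i, a i' := by
  have h := congrArg (coeff · 0) (derivative_prod_finset (s := s) (f := fun i => X + C (a i)))
  simpa [coeff_derivative, finsetSum_coeff, coeff_zero_prod] using h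

end ProdXAddC

theorem coeff_one_prod_X_add_C_of_ne_zero {K ι : Type*} [Field K] (s : Finset ι) (a : ι → K)
    (ha : ∀ i ∈ s, a i ≠ 0) :
    (∏ i ∈ s, (X + C (a i))).coeff 1 = (∏ i ∈ s, a i) * ∑ i ∈ s, (a i)⁻¹ := by
  classical
  rw [coeff_one_prod_X_add_C, mul_sum]
  refine sum_congr rfl fun i hi => ?_
  rw [← mul_prod_erase s a hi, mul_comm (a i), mul_inv_cancel_right₀ (ha i hi)]

theorem binomPoly_comp_X_sub_one (d j : ℕ) :
    (binomPoly d j).comp (X - 1) = (d ! : ℚ)⁻¹ • ∏ i ∈ range d, (X + C ((d : ℚ) - j - i - 1)) := by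
  rw [binomPoly, smul_comp, Polynomial.prod_comp]
  congr 1
  refine prod_congr rfl fun i _ => ?_
  rw [add_comp, X_comp, C_comp]
  simp only [C_sub, C_1]
  ring

theorem coeff_one_prod_range_X_add_C_natCast_sub {R : Type*} [CommRing R] (k j : ℕ) :
    (∏ i ∈ range (k + 1 + j), (X + C ((k : R) - i))).coeff 1 = (-1 : R) ^ j * k ! * j ! := by
  -- the factor with `i = k` is `X` itself
  rw [prod_range_add, prod_range_succ, sub_self, C_0, add_zero, mul_right_comm, coeff_mul_X,
    mul_coeff_zero, coeff_zero_prod_X_add_C, coeff_zero_prod_X_add_C,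
    Finset.prod_range_natCast_sub, ← descFactorial_eq_prod_range, descFactorial_self]
  have hneg : ∏ m ∈ range j, ((k : R) - ↑(k + 1 + m)) = ∏ m ∈ range j, -((m + 1 : ℕ) : R) :=
    prod_congr rfl fun m _ => by push_cast; ring
  rw [hneg, prod_neg, card_range, ← cast_prod, ← factorial_eq_prod_range_add_one]
  ring

theorem coeff_one_binomPoly_comp_X_sub_one_of_lt {d j : ℕ} (hj : j < d) :
    ((binomPoly d j).comp (X - 1)).coeff 1 = (-1) ^ j / (d * ((d - 1).choose j : ℚ)) := by
  obtain ⟨k, rfl⟩ : ∃ k, d = k + 1 + j := ⟨d - 1 - j, by omega⟩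
  have hshift : ∀ i : ℕ, ((k + 1 + j : ℕ) : ℚ) - j - i - 1 = k - i := fun i => by push_cast; ring
  simp only [binomPoly_comp_X_sub_one, hshift, coeff_smul, smul_eq_mul]
  rw [coeff_one_prod_range_X_add_C_natCast_sub]
  rw [show k + 1 + j - 1 = k + j by omega, show k + 1 + j = (k + j) + 1 by omega,
    factorial_succ, ← add_choose_mul_factorial_mul_factorial k j]
  have : ((k + j).choose j : ℚ) ≠ 0 := by exact_mod_cast (choose_pos (by omega)).ne'
  push_cast
  field_simp

theorem coeff_one_binomPoly_self_comp_X_sub_one (d : ℕ) :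
    ((binomPoly d d).comp (X - 1)).coeff 1 = (-1) ^ (d - 1) * harmonic d := by
  have hshift : ∀ i : ℕ, (d : ℚ) - d - i - 1 = -((i + 1 : ℕ) : ℚ) := fun i => by push_cast; ring
  have hne : ∀ i ∈ range d, -((i + 1 : ℕ) : ℚ) ≠ 0 := fun i _ => neg_ne_zero.mpr (by positivity)
  simp only [binomPoly_comp_X_sub_one, hshift, coeff_smul, smul_eq_mul]
  rw [coeff_one_prod_X_add_C_of_ne_zero _ _ hne, prod_neg, card_range, ← cast_prod,
    ← factorial_eq_prod_range_add_one]
  simp only [inv_neg, sum_neg_distrib]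
  rcases d with _ | d
  · simp
  · have : ((d + 1)! : ℚ) ≠ 0 := by positivity
    rw [harmonic, add_tsub_cancel_right]
    field_simp
    ring

theorem stmt_6_general (d : ℕ) (p : Polynomial ℚ) (hstar : ℕ → ℚ)
    (hp : p = ∑ j ∈ Finset.range (d + 1), Polynomial.C (hstar j) * binomPoly d j) :
    (p.comp (Polynomial.X - 1)).coeff 1 =
      (-1 : ℚ) ^ (d - 1) * hstar d * harmonic d +
        (1 / (d : ℚ)) * ∑ j ∈ Finset.range d, (-1 : ℚ) ^ j * hstar j / ((d - 1).choose j : ℚ) := by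
  subst hp
  simp only [Polynomial.sum_comp, finsetSum_coeff, mul_comp, C_comp, coeff_C_mul]
  rw [sum_range_succ, coeff_one_binomPoly_self_comp_X_sub_one, mul_sum]
  have hlower : ∀ j ∈ range d, hstar j * ((binomPoly d j).comp (X - 1)).coeff 1 =
      1 / d * ((-1) ^ j * hstar j / (d - 1).choose j) := fun j hj => by
    rw [coeff_one_binomPoly_comp_X_sub_one_of_lt (mem_range.mp hj)]
    ring
  rw [sum_congr rfl hlower]
  ring

theorem stmt_6 (d : ℕ) (hd : 0 < d) (p : Polynomial ℚ) (hstar : ℕ → ℚ)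
    (hp : p = ∑ j ∈ Finset.range (d + 1), Polynomial.C (hstar j) * binomPoly d j) :
    (p.comp (Polynomial.X - 1)).coeff 1 =
      (-1 : ℚ) ^ (d - 1) * hstar d * harmonic d +
        (1 / (d : ℚ)) * ∑ j ∈ Finset.range d, (-1 : ℚ) ^ j * hstar j / ((d - 1).choose j : ℚ) :=
  stmt_6_general d p hstar hp
end

section
/- For all non-negative integers n and positive integers k, the number of lattice points (x₁,…,x_n,y₁,…,y_n) ∈ ℤ^{2n} satisfying 0 ≤ x₁ ≤ x₂ ≤ ⋯ ≤ x_n ≤ k−1 and 0 ≤ y_i ≤ x_i for all i, equals h_n(1, 2, …, k), the complete homogeneous symmetric polynomial of degree n evaluated at 1, 2, …, k. -/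
/-!
Forgetting `y`, the lattice points project onto the monotone maps `x : Fin n → [0, k - 1]`,
and the fibre over `x` is the box `∏ i, [0, x i]` with `∏ i, (x i + 1)` points; summing over
`x` is the definition of `h_n(1, …, k)`.
-/

open scoped Classical

def combLatticePointsEquiv (n m : ℕ) :
    {q : (Fin n → ℕ) × (Fin n → ℕ) // Monotone q.1 ∧ (∀ i, q.1 i ≤ m) ∧ ∀ i, q.2 i ≤ q.1 i} ≃
      Σ x : {x : Fin n → Fin (m + 1) // Monotone x}, Π i, Fin ((x.1 i : ℕ) + 1) where
  toFun q :=
    ⟨⟨fun i => ⟨q.1.1 i, Nat.lt_succ_of_le (q.2.2.1 i)⟩, fun _ _ h => q.2.1 h⟩,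
      fun i => ⟨q.1.2 i, Nat.lt_succ_of_le (q.2.2.2 i)⟩⟩
  invFun p :=
    ⟨(fun i => p.1.1 i, fun i => p.2 i), fun _ _ h => p.1.2 h,
      fun i => Nat.le_of_lt_succ (p.1.1 i).isLt, fun i => Nat.le_of_lt_succ (p.2 i).isLt⟩
  left_inv _ := rfl
  right_inv _ := rfl

theorem hNat_eq_sum_monotone (n k : ℕ) :
    hNat n k = ∑ f : {f : Fin n → Fin k // Monotone f}, ∏ i, ((f.1 i : ℕ) + 1) :=
  Finset.sum_subtype _ (fun _ => by simp) (fun f : Fin n → Fin k => ∏ i, ((f i : ℕ) + 1))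

theorem stmt_8 (n k : ℕ) (hk : 0 < k) :
    Nat.card {q : (Fin n → ℕ) × (Fin n → ℕ) //
        Monotone q.1 ∧ (∀ i, q.1 i ≤ k - 1) ∧ ∀ i, q.2 i ≤ q.1 i} = hNat n k := by
  obtain ⟨m, rfl⟩ : ∃ m, k = m + 1 := ⟨k - 1, by omega⟩
  rw [Nat.add_sub_cancel, Nat.card_congr (combLatticePointsEquiv n m), Nat.card_sigma,
    hNat_eq_sum_monotone]
  simp only [Nat.card_eq_fintype_card, Fintype.card_pi, Fintype.card_fin]
end

section
/- Fix n ≥ 1. Define the polynomial G_n(x) by G_n(k) = h_n(1², 2², …, (k+1)²) for all non-negative integers k (complete homogeneous symmetric polynomial of degree n in the squares 1², …, (k+1)²). Then the coefficient of x in G_n(x−1) equals B_{2n}/n, where B_{2n} is a Bernoulli number. -/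
/-!
Write `h_n(m)` for `h_n(a_0, …, a_{m-1})`. Splitting monotone sequences according to whether
they end at the top value gives `h_{n+1}(m+1) = h_{n+1}(m) + a_m h_n(m+1)`, i.e. the generating
series `H_m(t) = ∑ h_n(m) tⁿ` satisfies `H_{m+1} (1 - a_m t) = H_m`. Hence
`H_m = ∏_{k<m} (1 - a_k t)⁻¹`, and its logarithmic derivative gives Newton's identity
`n h_n = ∑_{i<n} h_i p_{n-i}` with the power sums `p_j(m) = ∑_{k<m} a_k^j`.

For `a_k = (k+1)²`, Faulhaber's formula makes `p_j(m)` a polynomial in `m` without constant term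
and with linear coefficient `B_{2j}`, so Newton's identity defines polynomials `P_n` interpolating
`h_n`, and `P_n(0) = h_n(0) = 0` for `n ≥ 1`. In the linear coefficient of `∑_{i<n} P_i p_{n-i}`
only the term `i = 0` survives, whence `n [x] P_n = B_{2n}`. Finally `G(x - 1) = P_n`, as both
agree at every positive integer.
-/

open scoped Classical

/-- The complete homogeneous symmetric polynomial of degree `n` evaluated at the squares
`1², 2², …, m²`, i.e. `∑_{1 ≤ z₁ ≤ ⋯ ≤ z_n ≤ m} z₁² ⋯ z_n²`. -/
noncomputable def hSq (n m : ℕ) : ℚ :=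
  ∑ f ∈ Finset.univ.filter (fun f : Fin n → Fin m => Monotone f), ∏ i, ((f i : ℚ) + 1) ^ 2

open Finset

section CompleteHomogeneous

variable {R : Type*} [CommSemiring R] (a : ℕ → R)

noncomputable def completeHomog (n m : ℕ) : R :=
  ∑ f ∈ univ.filter (fun f : Fin n → Fin m => Monotone f), ∏ i, a (f i)

theorem completeHomog_zero_left (m : ℕ) : completeHomog a 0 m = 1 := by
  simp [completeHomog, Subsingleton.monotone]

theorem completeHomog_succ_zero (n : ℕ) : completeHomog a (n + 1) 0 = 0 := by
  simp [completeHomog]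

theorem Fin.monotone_snoc {α : Type*} [Preorder α] {n : ℕ} {g : Fin n → α} {x : α}
    (hg : Monotone g) (hx : ∀ i, g i ≤ x) : Monotone (Fin.snoc g x : Fin (n + 1) → α) := by
  intro i j hij
  induction j using Fin.lastCases with
  | last => induction i using Fin.lastCases with
    | last => exact le_rfl
    | cast i => simpa using hx i
  | cast j => induction i using Fin.lastCases with
    | last => exact absurd hij (Fin.castSucc_lt_last j).not_ge
    | cast i => simpa using hg (Fin.castSucc_le_castSucc_iff.mp hij)

theorem sum_monotone_last_eq_last (n m : ℕ) :
    ∑ f ∈ univ.filter (fun f : Fin (n + 1) → Fin (m + 1) =>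
        Monotone f ∧ f (Fin.last n) = Fin.last m), ∏ i, a (f i) =
      a m * completeHomog a n (m + 1) := by
  rw [completeHomog, mul_sum]
  refine sum_nbij' Fin.init (fun g => Fin.snoc g (Fin.last m)) ?_ ?_ ?_ ?_ ?_
  · simp only [mem_filter, mem_univ, true_and]
    rintro f ⟨hf, -⟩ i j hij
    exact hf (Fin.castSucc_le_castSucc_iff.mpr hij)
  · simp only [mem_filter, mem_univ, true_and, Fin.snoc_last, and_true]
    intro g hg
    exact Fin.monotone_snoc hg fun _ => Fin.le_last _
  · simp only [mem_filter, mem_univ, true_and]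
    rintro f ⟨-, hlast⟩
    rw [← hlast, Fin.snoc_init_self]
  · intro g _
    exact Fin.init_snoc _ _
  · simp only [mem_filter, mem_univ, true_and]
    rintro f ⟨-, hlast⟩
    rw [Fin.prod_univ_castSucc, hlast, mul_comm]
    rfl

theorem sum_monotone_last_ne_last (n m : ℕ) :
    ∑ f ∈ univ.filter (fun f : Fin (n + 1) → Fin (m + 1) =>
        Monotone f ∧ f (Fin.last n) ≠ Fin.last m), ∏ i, a (f i) = completeHomog a (n + 1) m := by
  rw [completeHomog]
  symm
  refine sum_bij (fun g _ => Fin.castSucc ∘ g) ?_ ?_ ?_ ?_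
  · simp only [mem_filter, mem_univ, true_and]
    exact fun g hg => ⟨Fin.strictMono_castSucc.monotone.comp hg, Fin.castSucc_ne_last _⟩
  · intro g _ g' _ h
    funext i
    exact Fin.castSucc_injective _ (congrFun h i)
  · simp only [mem_filter, mem_univ, true_and]
    rintro f ⟨hf, hlast⟩
    have hne : ∀ i, f i ≠ Fin.last m := fun i =>
      ((hf (Fin.le_last i)).trans_lt (Fin.lt_last_iff_ne_last.mpr hlast)).ne
    refine ⟨fun i => (f i).castPred (hne i), fun i j hij => ?_, funext fun i => ?_⟩
    · exact Fin.castPred_le_castPred_iff.mpr (hf hij)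
    · simp
  · intro g _
    rfl

theorem completeHomog_succ_succ (n m : ℕ) :
    completeHomog a (n + 1) (m + 1) =
      completeHomog a (n + 1) m + a m * completeHomog a n (m + 1) := by
  conv_lhs => rw [completeHomog, ← sum_filter_add_sum_filter_not _
      (fun f : Fin (n + 1) → Fin (m + 1) => f (Fin.last n) = Fin.last m),
    filter_filter, filter_filter]
  rw [sum_monotone_last_eq_last, sum_monotone_last_ne_last, add_comm]

noncomputable def powerSum (i m : ℕ) : R := ∑ k ∈ range m, a k ^ i

end CompleteHomogeneous

section NewtonIdentity

open PowerSeries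

variable {R : Type*} [CommRing R]

noncomputable def geomSeries (x : R) : R⟦X⟧ := rescale x (mk 1)

theorem geomSeries_mul_one_sub (x : R) : geomSeries x * (1 - C x * X) = 1 := by
  rw [geomSeries, ← rescale_X, ← map_one (rescale x), ← map_sub, ← map_mul,
    mk_one_mul_one_sub_eq_one]

theorem coeff_geomSeries (x : R) (n : ℕ) : coeff n (geomSeries x) = x ^ n := by
  simp [geomSeries]

theorem X_mul_derivative_geomSeries (x : R) :
    X * d⁄dX R (geomSeries x) = geomSeries x * (geomSeries x - 1) := by
  have hG := geomSeries_mul_one_sub x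
  have hD := congrArg (d⁄dX R) hG
  simp only [Derivation.leibniz, smul_eq_mul, map_sub, derivative_one, derivative_C,
    derivative_X] at hD
  linear_combination (-X * d⁄dX R (geomSeries x) - geomSeries x) * hG + X * geomSeries x * hD

theorem coeff_X_mul_derivative (f : R⟦X⟧) (n : ℕ) :
    coeff n (X * d⁄dX R f) = n * coeff n f := by
  cases n with
  | zero => simp
  | succ n =>
    rw [coeff_succ_X_mul, coeff_derivative]
    push_cast
    ring

variable (a : ℕ → R)

noncomputable def completeHomogSeries (m : ℕ) : R⟦X⟧ := mk fun n => completeHomog a n m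

noncomputable def powerSumSeries (m : ℕ) : R⟦X⟧ := ∑ k ∈ range m, (geomSeries (a k) - 1)

theorem completeHomogSeries_zero : completeHomogSeries a 0 = 1 := by
  ext (_ | n) <;> simp [completeHomogSeries, completeHomog_zero_left, completeHomog_succ_zero]

theorem completeHomogSeries_succ_mul_one_sub (m : ℕ) :
    completeHomogSeries a (m + 1) * (1 - C (a m) * X) = completeHomogSeries a m := by
  ext (_ | n)
  · simp [completeHomogSeries, completeHomog_zero_left]
  · simp [completeHomogSeries, mul_sub, ← mul_assoc, coeff_succ_mul_X, completeHomog_succ_succ]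
    ring

theorem completeHomogSeries_succ (m : ℕ) :
    completeHomogSeries a (m + 1) = completeHomogSeries a m * geomSeries (a m) := by
  rw [← completeHomogSeries_succ_mul_one_sub a m, mul_assoc, mul_comm (1 - _),
    geomSeries_mul_one_sub, mul_one]

theorem X_mul_derivative_completeHomogSeries (m : ℕ) :
    X * d⁄dX R (completeHomogSeries a m) = completeHomogSeries a m * powerSumSeries a m := by
  induction m with
  | zero => simp [completeHomogSeries_zero, powerSumSeries]
  | succ m ih =>
    rw [completeHomogSeries_succ, powerSumSeries, sum_range_succ, ← powerSumSeries,
      Derivation.leibniz, smul_eq_mul, smul_eq_mul]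
    linear_combination
      geomSeries (a m) * ih + completeHomogSeries a m * X_mul_derivative_geomSeries (a m)

theorem coeff_powerSumSeries {i : ℕ} (hi : i ≠ 0) (m : ℕ) :
    coeff i (powerSumSeries a m) = powerSum a i m := by
  simp only [powerSumSeries, powerSum, map_sum, map_sub, coeff_geomSeries, coeff_one, if_neg hi,
    sub_zero]

theorem newton_identity (n m : ℕ) :
    n * completeHomog a n m = ∑ i ∈ range n, completeHomog a i m * powerSum a (n - i) m := by
  have hcoeff := congrArg (coeff n) (X_mul_derivative_completeHomogSeries a m)
  rw [coeff_X_mul_derivative, coeff_mul, Nat.sum_antidiagonal_eq_sum_range_succ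
      (fun i j => coeff i (completeHomogSeries a m) * coeff j (powerSumSeries a m)),
    sum_range_succ] at hcoeff
  have h0 : coeff 0 (powerSumSeries a m) = 0 := by
    simp only [powerSumSeries, map_sum, map_sub, coeff_geomSeries, coeff_one, pow_zero,
      ↓reduceIte, sub_self, sum_const_zero]
  simp only [completeHomogSeries, coeff_mk, Nat.sub_self, h0, mul_zero, add_zero] at hcoeff
  rw [hcoeff]
  refine sum_congr rfl fun i hi => ?_
  rw [coeff_powerSumSeries a (Nat.sub_ne_zero_of_lt (mem_range.mp hi))]

end NewtonIdentity

section Faulhaber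

open Polynomial

noncomputable def faulhaber (p : ℕ) : ℚ[X] :=
  ∑ i ∈ range (p + 1), C (bernoulli' i * (p + 1).choose i / (p + 1)) * X ^ (p + 1 - i)

theorem faulhaber_eval (p m : ℕ) :
    (faulhaber p).eval (m : ℚ) = ∑ k ∈ range m, ((k : ℚ) + 1) ^ p := by
  have hshift : ∑ k ∈ range m, ((k : ℚ) + 1) ^ p = ∑ k ∈ Ico 1 (m + 1), (k : ℚ) ^ p := by
    rw [sum_Ico_eq_sum_range, add_tsub_cancel_right]
    simp [add_comm]
  rw [hshift, sum_Ico_pow, faulhaber, eval_finsetSum]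
  simp [mul_div_right_comm]

theorem faulhaber_coeff_zero (p : ℕ) : (faulhaber p).coeff 0 = 0 := by
  rw [faulhaber, finsetSum_coeff]
  refine sum_eq_zero fun i hi => ?_
  rw [coeff_C_mul, coeff_X_pow, if_neg (by have := mem_range.mp hi; omega), mul_zero]

theorem faulhaber_coeff_one {p : ℕ} (hp : p ≠ 0) : (faulhaber p).coeff 1 = bernoulli' p := by
  rw [faulhaber, finsetSum_coeff, sum_eq_single p]
  · rw [coeff_C_mul, coeff_X_pow, if_pos (by omega), mul_one, Nat.choose_succ_self_right]
    push_cast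
    field_simp
  · intro i _ hne
    rw [coeff_C_mul, coeff_X_pow, if_neg (by omega), mul_zero]
  · exact fun h => absurd (self_mem_range_succ p) h

end Faulhaber

section InterpolatingPolynomial

open Polynomial

theorem Polynomial.eq_of_eval_natCast_succ_eq {R : Type*} [CommRing R] [IsDomain R] [CharZero R]
    {p q : R[X]} (h : ∀ k : ℕ, p.eval ((k : R) + 1) = q.eval ((k : R) + 1)) : p = q :=
  eq_of_infinite_eval_eq p q <| Set.infinite_of_injective_forall_mem
    (fun _ _ hkl => by simpa using hkl) h

theorem hSq_eq_completeHomog (n m : ℕ) :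
    hSq n m = completeHomog (fun k => ((k : ℚ) + 1) ^ 2) n m := rfl

noncomputable def hSqPoly : ℕ → ℚ[X]
  | 0 => 1
  | n + 1 => C ((n : ℚ) + 1)⁻¹ * ∑ i : Fin (n + 1), hSqPoly i * faulhaber (2 * (n + 1 - i))

theorem hSqPoly_succ (n : ℕ) :
    hSqPoly (n + 1) =
      C ((n : ℚ) + 1)⁻¹ * ∑ i ∈ range (n + 1), hSqPoly i * faulhaber (2 * (n + 1 - i)) := by
  rw [hSqPoly, Fin.sum_univ_eq_sum_range (fun i => hSqPoly i * faulhaber (2 * (n + 1 - i)))]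

theorem hSqPoly_eval (n m : ℕ) : (hSqPoly n).eval (m : ℚ) = hSq n m := by
  induction n using Nat.strong_induction_on with
  | _ n ih =>
    cases n with
    | zero => rw [hSqPoly, eval_one, hSq_eq_completeHomog, completeHomog_zero_left]
    | succ n =>
      have hterm : ∀ i ∈ range (n + 1), (hSqPoly i * faulhaber (2 * (n + 1 - i))).eval (m : ℚ) =
          completeHomog (fun k => ((k : ℚ) + 1) ^ 2) i m *
            powerSum (fun k => ((k : ℚ) + 1) ^ 2) (n + 1 - i) m := by
        intro i hi
        rw [eval_mul, ih i (mem_range.mp hi), faulhaber_eval, powerSum, hSq_eq_completeHomog]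
        simp_rw [pow_mul]
      rw [hSqPoly_succ, eval_mul, eval_C, eval_finsetSum, sum_congr rfl hterm,
        ← newton_identity, hSq_eq_completeHomog]
      push_cast
      field_simp

theorem hSqPoly_coeff_zero {n : ℕ} (hn : n ≠ 0) : (hSqPoly n).coeff 0 = 0 := by
  obtain ⟨n, rfl⟩ := Nat.exists_eq_add_one_of_ne_zero hn
  rw [coeff_zero_eq_eval_zero, ← Nat.cast_zero, hSqPoly_eval]
  exact completeHomog_succ_zero (fun k : ℕ => ((k : ℚ) + 1) ^ 2) n

theorem hSqPoly_coeff_one (n : ℕ) :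
    (hSqPoly (n + 1)).coeff 1 = bernoulli' (2 * (n + 1)) / (n + 1) := by
  rw [hSqPoly_succ, coeff_C_mul, finsetSum_coeff, sum_range_succ']
  have hhigher : ∀ i ∈ range n,
      (hSqPoly (i + 1) * faulhaber (2 * (n + 1 - (i + 1)))).coeff 1 = 0 := fun i _ => by
    rw [mul_coeff_one, hSqPoly_coeff_zero i.succ_ne_zero, faulhaber_coeff_zero, zero_mul, mul_zero,
      add_zero]
  rw [sum_eq_zero hhigher, zero_add, hSqPoly, one_mul, Nat.sub_zero,
    faulhaber_coeff_one (by omega), inv_mul_eq_div]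

end InterpolatingPolynomial

theorem stmt_18 (n : ℕ) (hn : 0 < n) (G : Polynomial ℚ)
    (hval : ∀ k : ℕ, G.eval (k : ℚ) = hSq n (k + 1)) :
    (G.comp (Polynomial.X - 1)).coeff 1 = bernoulli' (2 * n) / n := by
  obtain ⟨n, rfl⟩ := Nat.exists_eq_add_one_of_ne_zero hn.ne'
  have hG : G.comp (Polynomial.X - 1) = hSqPoly (n + 1) :=
    Polynomial.eq_of_eval_natCast_succ_eq fun k => by
      rw [Polynomial.eval_comp, Polynomial.eval_sub, Polynomial.eval_X, Polynomial.eval_one,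
        add_sub_cancel_right, hval, ← Nat.cast_succ, hSqPoly_eval]
  rw [hG, hSqPoly_coeff_one]
  push_cast
  ring
end
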